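/- arXiv:1512.02796 — 2 statements merged into one kernel-verified Lean document; each statement's English description precedes it below -/
import Mathlib

section
/- Let B be a bounded coercive bilinear form on H¹(Ω) and for parameters (κ,μ) ∈ L^∞₊(Ω)² let φ(κ,μ) ∈ H¹(Ω) denote the solution of B_{κ,μ}(φ,v) = F(v) for all v ∈ H¹(Ω), where B_{κ,μ}(u,v) = ∫_Ω (κ∇u·∇v + μuv)dx + (1/2)∫_{∂Ω} uv dS and F(v) = 2∫_{∂Ω} Φ v dS. Then the map (κ,μ) ↦ φ(κ,μ) is Fréchet differentiable on L^∞₊(Ω)², and its derivative in direction (ϑ,θ) ∈ L^∞(Ω)² is the unique φ′ ∈ H¹(Ω) satisfying B_{κ,μ}(φ′,v) = −∫_Ω ϑ ∇φ·∇v dx − ∫_Ω θ φ v dx for all v ∈ H¹(Ω). -/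
open MeasureTheory
open scoped RealInnerProductSpace ENNReal

section Aux

variable {H1 : Type*} [NormedAddCommGroup H1] [InnerProductSpace ℝ H1] [CompleteSpace H1]

/-- The Riesz representation map as a continuous linear map. -/
noncomputable def rieszCLM (H1 : Type*) [NormedAddCommGroup H1] [InnerProductSpace ℝ H1]
    [CompleteSpace H1] : (H1 →L[ℝ] ℝ) →L[ℝ] H1 :=
  (InnerProductSpace.toDual ℝ H1).symm.toContinuousLinearEquiv.toContinuousLinearMap

lemma inner_rieszCLM (f : H1 →L[ℝ] ℝ) (v : H1) : ⟪rieszCLM H1 f, v⟫ = f v := by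
  simp [rieszCLM, InnerProductSpace.toDual_symm_apply]

/-- Turning a bilinear form into an operator, continuously linearly in the form. -/
noncomputable def sharpCLM (H1 : Type*) [NormedAddCommGroup H1] [InnerProductSpace ℝ H1]
    [CompleteSpace H1] : (H1 →L[ℝ] H1 →L[ℝ] ℝ) →L[ℝ] (H1 →L[ℝ] H1) :=
  ContinuousLinearMap.compL ℝ H1 (H1 →L[ℝ] ℝ) H1 (rieszCLM H1)

lemma inner_sharpCLM (B : H1 →L[ℝ] H1 →L[ℝ] ℝ) (u v : H1) :
    ⟪sharpCLM H1 B u, v⟫ = B u v := by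
  simp [sharpCLM, inner_rieszCLM]

lemma linf_ae_le {Ω : Type*} [MeasurableSpace Ω] {μm : Measure Ω} (f : Lp ℝ ⊤ μm) :
    ∀ᵐ x ∂μm, ‖f x‖ ≤ ‖f‖ := by
  have h1 : ∀ᵐ x ∂μm, (‖f x‖₊ : ℝ≥0∞) ≤ eLpNormEssSup (f : Ω → ℝ) μm :=
    ae_le_eLpNormEssSup
  have h2 : eLpNormEssSup (f : Ω → ℝ) μm ≠ ∞ := by
    rw [← eLpNorm_exponent_top]
    exact (Lp.eLpNorm_lt_top f).ne
  filter_upwards [h1] with x hx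
  rw [Lp.norm_def, eLpNorm_exponent_top]
  calc ‖f x‖ = ((‖f x‖₊ : ℝ≥0∞)).toReal := by simp
    _ ≤ (eLpNormEssSup (f : Ω → ℝ) μm).toReal := ENNReal.toReal_mono h2 hx

end Aux

/- STATEMENT 2: Fréchet differentiability of the parameter-to-solution map
(κ,μ) ↦ φ(κ,μ) on L^∞₊(Ω)², where φ(κ,μ) ∈ H¹(Ω) solves
B_{κ,μ}(φ,v) = F(v) for all v, with
B_{κ,μ}(u,v) = ∫_Ω (κ∇u·∇v + μuv)dx + (1/2)∫_{∂Ω}uv dS and F(v) = 2∫_{∂Ω}Φv dS.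
The form is assembled from the bounded trilinear maps `Adiff` (u,v ↦ ∫ κ∇u·∇v),
`Aabs` (u,v ↦ ∫ μuv) and bilinear `Abd` (u,v ↦ ∫_{∂Ω}uv dS); for parameters in the
positive cone L^∞₊(Ω)² the form is coercive (`hcoer`) so the solution exists and
is unique (`hsol`).  The derivative in direction (ϑ,θ) is the unique φ′ with
B_{κ,μ}(φ′,v) = −∫ ϑ∇φ·∇v − ∫ θφv for all v. -/
set_option maxHeartbeats 1000000 in
set_option synthInstance.maxHeartbeats 400000 in
theorem stmt2
    {Ω : Type*} [MeasurableSpace Ω] (μm : Measure Ω)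
    (H1 : Type*) [NormedAddCommGroup H1] [InnerProductSpace ℝ H1] [CompleteSpace H1]
    (Adiff Aabs : Lp ℝ ⊤ μm →L[ℝ] H1 →L[ℝ] H1 →L[ℝ] ℝ)
    (Abd : H1 →L[ℝ] H1 →L[ℝ] ℝ)
    (F : H1 →L[ℝ] ℝ)
    (φ : Lp ℝ ⊤ μm × Lp ℝ ⊤ μm → H1)
    -- the positive cone L^∞₊(Ω)²
    (S : Set (Lp ℝ ⊤ μm × Lp ℝ ⊤ μm))
    (hS : S = {p | (∃ c > (0:ℝ), ∀ᵐ x ∂μm, c ≤ p.1 x) ∧ (∃ c > (0:ℝ), ∀ᵐ x ∂μm, c ≤ p.2 x)})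
    (hcoer : ∀ p ∈ S, IsCoercive (Adiff p.1 + Aabs p.2 + (1/2 : ℝ) • Abd))
    (hsol : ∀ p ∈ S, ∀ v : H1,
      Adiff p.1 (φ p) v + Aabs p.2 (φ p) v + (1/2 : ℝ) * Abd (φ p) v = F v) :
    ∀ p ∈ S, ∃ D : Lp ℝ ⊤ μm × Lp ℝ ⊤ μm →L[ℝ] H1,
      HasFDerivAt φ D p ∧
      ∀ ϑ θ : Lp ℝ ⊤ μm,
        (∀ v : H1,
          Adiff p.1 (D (ϑ, θ)) v + Aabs p.2 (D (ϑ, θ)) v + (1/2 : ℝ) * Abd (D (ϑ, θ)) v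
            = - Adiff ϑ (φ p) v - Aabs θ (φ p) v) ∧
        (∀ w : H1,
          (∀ v : H1, Adiff p.1 w v + Aabs p.2 w v + (1/2 : ℝ) * Abd w v
              = - Adiff ϑ (φ p) v - Aabs θ (φ p) v) → w = D (ϑ, θ)) := by
  intro p hp
  classical
  -- openness of the positive cone
  have hSopen : IsOpen S := by
    rw [hS, Metric.isOpen_iff]
    rintro q ⟨⟨c₁, hc₁, h₁⟩, ⟨c₂, hc₂, h₂⟩⟩
    refine ⟨min c₁ c₂ / 2, by positivity, ?_⟩
    intro r hr
    have key : ∀ i : Fin 2, True := fun _ => trivial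
    have hdist1 : ‖r.1 - q.1‖ < min c₁ c₂ / 2 := by
      rw [← dist_eq_norm]
      calc dist r.1 q.1 ≤ dist r q := by rw [Prod.dist_eq]; exact le_max_left _ _
        _ < _ := hr
    have hdist2 : ‖r.2 - q.2‖ < min c₁ c₂ / 2 := by
      rw [← dist_eq_norm]
      calc dist r.2 q.2 ≤ dist r q := by rw [Prod.dist_eq]; exact le_max_right _ _
        _ < _ := hr
    constructor
    · refine ⟨c₁ / 2, by positivity, ?_⟩
      filter_upwards [h₁, linf_ae_le (r.1 - q.1), Lp.coeFn_sub r.1 q.1] with x hx hx2 hx3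
      have : ‖r.1 x - q.1 x‖ ≤ ‖r.1 - q.1‖ := by rw [hx3, Pi.sub_apply] at hx2; exact hx2
      have h4 : |r.1 x - q.1 x| < c₁ / 2 := by
        rw [← Real.norm_eq_abs]
        exact lt_of_le_of_lt this (lt_of_lt_of_le hdist1 (by
          have := min_le_left c₁ c₂; linarith))
      have := abs_lt.mp h4
      linarith
    · refine ⟨c₂ / 2, by positivity, ?_⟩
      filter_upwards [h₂, linf_ae_le (r.2 - q.2), Lp.coeFn_sub r.2 q.2] with x hx hx2 hx3
      have : ‖r.2 x - q.2 x‖ ≤ ‖r.2 - q.2‖ := by rw [hx3, Pi.sub_apply] at hx2; exact hx2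
      have h4 : |r.2 x - q.2 x| < c₂ / 2 := by
        rw [← Real.norm_eq_abs]
        exact lt_of_le_of_lt this (lt_of_lt_of_le hdist2 (by
          have := min_le_right c₁ c₂; linarith))
      have := abs_lt.mp h4
      linarith
  -- the operator-valued affine map
  have : ContinuousAdd (H1 →L[ℝ] H1 →L[ℝ] ℝ) := ⟨by
    have h : IsTopologicalAddGroup (H1 →L[ℝ] H1 →L[ℝ] ℝ) := inferInstance
    exact h.continuous_add⟩
  set Tlin : (Lp ℝ ⊤ μm × Lp ℝ ⊤ μm) →L[ℝ] (H1 →L[ℝ] H1) :=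
    (sharpCLM H1).comp
      (Adiff.comp (ContinuousLinearMap.fst ℝ (Lp ℝ ⊤ μm) (Lp ℝ ⊤ μm)) + Aabs.comp (ContinuousLinearMap.snd ℝ (Lp ℝ ⊤ μm) (Lp ℝ ⊤ μm)))
    with hTlin
  set Cc : H1 →L[ℝ] H1 := sharpCLM H1 ((1/2 : ℝ) • Abd) with hCc
  set T : (Lp ℝ ⊤ μm × Lp ℝ ⊤ μm) → (H1 →L[ℝ] H1) := fun q => Tlin q + Cc with hTdef
  have hTB : ∀ q (u v : H1),
      ⟪T q u, v⟫ = Adiff q.1 u v + Aabs q.2 u v + (1/2 : ℝ) * Abd u v := by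
    intro q u v
    have h1 : T q u = sharpCLM H1 (Adiff q.1 + Aabs q.2 + (1/2 : ℝ) • Abd) u := by
      simp [hTdef, hTlin, hCc, map_add]
    rw [h1, inner_sharpCLM]
    simp [ContinuousLinearMap.add_apply, ContinuousLinearMap.smul_apply, smul_eq_mul]
  -- invertibility on S
  have key : ∀ q ∈ S, ∃ u : (H1 →L[ℝ] H1)ˣ, (u : H1 →L[ℝ] H1) = T q := by
    intro q hq
    refine ⟨(ContinuousLinearEquiv.unitsEquiv ℝ H1).symm (hcoer q hq).continuousLinearEquivOfBilin, ?_⟩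
    have hcoe : (((ContinuousLinearEquiv.unitsEquiv ℝ H1).symm
        (hcoer q hq).continuousLinearEquivOfBilin : (H1 →L[ℝ] H1)ˣ) : H1 →L[ℝ] H1)
        = (hcoer q hq).continuousLinearEquivOfBilin := rfl
    rw [hcoe]
    ext u
    apply ext_inner_right ℝ
    intro v
    rw [ContinuousLinearEquiv.coe_coe, (hcoer q hq).continuousLinearEquivOfBilin_apply, hTB]
    simp [ContinuousLinearMap.add_apply, ContinuousLinearMap.smul_apply, smul_eq_mul]
  -- the right-hand side vector
  set yF : H1 := rieszCLM H1 F with hyF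
  have hTφ : ∀ q, q ∈ S → T q (φ q) = yF := by
    intro q hq
    apply ext_inner_right ℝ
    intro v
    rw [hTB, hyF, inner_rieszCLM]
    exact hsol q hq v
  have hφ : ∀ q, q ∈ S → φ q = Ring.inverse (T q) yF := by
    intro q hq
    obtain ⟨u, hu⟩ := key q hq
    calc φ q = (↑u⁻¹ : H1 →L[ℝ] H1) (T q (φ q)) := by
          rw [← hu, ← ContinuousLinearMap.mul_apply, ← Units.val_mul, inv_mul_cancel,
            Units.val_one, ContinuousLinearMap.one_apply]
      _ = Ring.inverse (T q) yF := by rw [hTφ q hq, ← hu, Ring.inverse_unit]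
  obtain ⟨up, hup⟩ := key p hp
  -- the derivative
  have hTderiv : HasFDerivAt T Tlin p := (Tlin.hasFDerivAt).add_const Cc
  have hinvderiv : HasFDerivAt (fun q => Ring.inverse (T q))
      ((-(ContinuousLinearMap.mulLeftRight ℝ (H1 →L[ℝ] H1) ↑up⁻¹ ↑up⁻¹)).comp Tlin) p := by
    have h1 : HasFDerivAt Ring.inverse
        (-(ContinuousLinearMap.mulLeftRight ℝ (H1 →L[ℝ] H1) ↑up⁻¹ ↑up⁻¹)) (T p) := by
      rw [← hup]; exact hasFDerivAt_ringInverse up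
    exact h1.comp p hTderiv
  have hg : HasFDerivAt (fun q => (Ring.inverse (T q)) yF)
      ((Ring.inverse (T p)).comp (0 : (Lp ℝ ⊤ μm × Lp ℝ ⊤ μm) →L[ℝ] H1) +
        (((-(ContinuousLinearMap.mulLeftRight ℝ (H1 →L[ℝ] H1) ↑up⁻¹ ↑up⁻¹)).comp Tlin)).flip yF)
      p := hinvderiv.clm_apply (hasFDerivAt_const yF p)
  set D : (Lp ℝ ⊤ μm × Lp ℝ ⊤ μm) →L[ℝ] H1 :=
    (Ring.inverse (T p)).comp (0 : (Lp ℝ ⊤ μm × Lp ℝ ⊤ μm) →L[ℝ] H1) +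
      (((-(ContinuousLinearMap.mulLeftRight ℝ (H1 →L[ℝ] H1) ↑up⁻¹ ↑up⁻¹)).comp Tlin)).flip yF
    with hD
  have hφp : φ p = (↑up⁻¹ : H1 →L[ℝ] H1) yF := by
    rw [hφ p hp, ← hup, Ring.inverse_unit]
  have hDapp : ∀ h, D h = -((↑up⁻¹ : H1 →L[ℝ] H1) (Tlin h (φ p))) := by
    intro h
    rw [hD]
    simp only [ContinuousLinearMap.add_apply, ContinuousLinearMap.comp_apply,
      ContinuousLinearMap.zero_apply, map_zero, ContinuousLinearMap.flip_apply,
      ContinuousLinearMap.neg_apply, ContinuousLinearMap.mulLeftRight_apply,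
      ContinuousLinearMap.mul_apply, hφp]
    abel
  have hTD : ∀ h, T p (D h) = -(Tlin h (φ p)) := by
    intro h
    rw [hDapp, map_neg]
    congr 1
    rw [← hup, ← ContinuousLinearMap.mul_apply, ← Units.val_mul, mul_inv_cancel,
      Units.val_one, ContinuousLinearMap.one_apply]
  have hTlinInner : ∀ (ϑ θ : Lp ℝ ⊤ μm) (v : H1),
      ⟪Tlin (ϑ, θ) (φ p), v⟫ = Adiff ϑ (φ p) v + Aabs θ (φ p) v := by
    intro ϑ θ v
    have h1 : Tlin (ϑ, θ) = sharpCLM H1 (Adiff ϑ + Aabs θ) := by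
      simp [hTlin, map_add]
    rw [h1, inner_sharpCLM]
    simp [ContinuousLinearMap.add_apply]
  refine ⟨D, ?_, ?_⟩
  · -- differentiability
    refine hg.congr_of_eventuallyEq ?_
    filter_upwards [hSopen.mem_nhds hp] with q hq
    exact hφ q hq
  · intro ϑ θ
    have hchar : ∀ v : H1,
        Adiff p.1 (D (ϑ, θ)) v + Aabs p.2 (D (ϑ, θ)) v + (1/2 : ℝ) * Abd (D (ϑ, θ)) v
          = - Adiff ϑ (φ p) v - Aabs θ (φ p) v := by
      intro v
      rw [← hTB p (D (ϑ, θ)) v, hTD (ϑ, θ), inner_neg_left, hTlinInner]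
      ring
    refine ⟨hchar, ?_⟩
    intro w hw
    have hTeq : T p w = T p (D (ϑ, θ)) := by
      apply ext_inner_right ℝ
      intro v
      rw [hTB, hTB, hw v, hchar v]
    have h1 : ((↑up⁻¹ * ↑up : H1 →L[ℝ] H1)) w = w := by
      rw [← Units.val_mul, inv_mul_cancel]; simp
    have h2 : ((↑up⁻¹ * ↑up : H1 →L[ℝ] H1)) (D (ϑ, θ)) = D (ϑ, θ) := by
      rw [← Units.val_mul, inv_mul_cancel]; simp
    calc w = ((↑up⁻¹ * ↑up : H1 →L[ℝ] H1)) w := h1.symm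
      _ = (↑up⁻¹ : H1 →L[ℝ] H1) (T p w) := by rw [ContinuousLinearMap.mul_apply, hup]
      _ = (↑up⁻¹ : H1 →L[ℝ] H1) (T p (D (ϑ, θ))) := by rw [hTeq]
      _ = ((↑up⁻¹ * ↑up : H1 →L[ℝ] H1)) (D (ϑ, θ)) := by rw [ContinuousLinearMap.mul_apply, hup]
      _ = D (ϑ, θ) := h2
end

section
/- Under the assumptions of the preceding statement, the measurement map (κ,μ) ↦ H = μ·φ(κ,μ) from L^∞₊(Ω)² to L²(Ω) is Fréchet differentiable at every (κ,μ) ∈ L^∞₊(Ω)², with derivative (ϑ,θ) ↦ μ φ′ + θ φ, where φ = φ(κ,μ) and φ′ = (φ′(κ,μ))(ϑ,θ) is as in the linearised variational problem. -/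
open MeasureTheory

/- STATEMENT 3 (Lemma 3.1): the measurement map (κ,μ) ↦ H = μ·φ(κ,μ),
L^∞₊(Ω)² → L²(Ω), is Fréchet differentiable with derivative
(ϑ,θ) ↦ μφ′ + θφ.  Here `mul` is the continuous bilinear multiplication
L^∞(Ω) × H¹(Ω) → L²(Ω), (λ,ψ) ↦ λψ, `φ` is the parameter-to-solution map of the
diffusion approximation, which is Fréchet differentiable at every point of the
positive cone S = L^∞₊(Ω)² with derivative `Dφ p` (the solution of the linearised
variational problem), as in the preceding statement. -/
theorem stmt3
    {Ω : Type*} [MeasurableSpace Ω] (μm : Measure Ω)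
    (H1 : Type*) [NormedAddCommGroup H1] [InnerProductSpace ℝ H1] [CompleteSpace H1]
    -- continuous bilinear multiplication L^∞(Ω) × H¹(Ω) → L²(Ω)
    (mul : Lp ℝ ⊤ μm →L[ℝ] H1 →L[ℝ] Lp ℝ 2 μm)
    (φ : Lp ℝ ⊤ μm × Lp ℝ ⊤ μm → H1)
    (S : Set (Lp ℝ ⊤ μm × Lp ℝ ⊤ μm))
    (hS : S = {p | (∃ c > (0:ℝ), ∀ᵐ x ∂μm, c ≤ p.1 x) ∧ (∃ c > (0:ℝ), ∀ᵐ x ∂μm, c ≤ p.2 x)})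
    (Dφ : Lp ℝ ⊤ μm × Lp ℝ ⊤ μm → (Lp ℝ ⊤ μm × Lp ℝ ⊤ μm →L[ℝ] H1))
    (hφ : ∀ p ∈ S, HasFDerivAt φ (Dφ p) p) :
    ∀ p ∈ S, ∃ DH : Lp ℝ ⊤ μm × Lp ℝ ⊤ μm →L[ℝ] Lp ℝ 2 μm,
      HasFDerivAt (fun q : Lp ℝ ⊤ μm × Lp ℝ ⊤ μm => mul q.2 (φ q)) DH p ∧
      ∀ ϑ θ : Lp ℝ ⊤ μm,
        DH (ϑ, θ) = mul p.2 (Dφ p (ϑ, θ)) + mul θ (φ p) := by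
  intro p hp
  have hg : HasFDerivAt (fun q : Lp ℝ ⊤ μm × Lp ℝ ⊤ μm => (q.2, φ q))
      ((ContinuousLinearMap.snd ℝ (Lp ℝ ⊤ μm) (Lp ℝ ⊤ μm)).prod (Dφ p)) p :=
    HasFDerivAt.prodMk (hasFDerivAt_snd) (hφ p hp)
  have hb := (mul.isBoundedBilinearMap.hasFDerivAt (p.2, φ p)).comp p hg
  refine ⟨_, hb, fun ϑ θ => ?_⟩
  simp [IsBoundedBilinearMap.deriv_apply]
end
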